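/- arXiv:1209.3575 — 2 statements merged into one kernel-verified Lean document; each statement's English description precedes it below -/
import Mathlib

section
/- Let t ≥ 2, let M be a matroid of rank r on E, and let E = E_1 ∪ ⋯ ∪ E_t be a good t-partition of M with associated integers a_1,…,a_t. Then the family B(M̄_1) = {B a base of M : |B ∩ E_1| ≥ a_1} is the collection of bases of a matroid on E. -/
open Matroid Set

/-- The rank of a matroid: the supremum of the cardinalities of its independent sets. -/
noncomputable def mrk {α : Type*} (M : Matroid α) : ℕ :=
  sSup {n : ℕ | ∃ I, M.Indep I ∧ I.ncard = n}

/-- `ℬ` is the collection of bases of a matroid on the ground set `E`. -/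
def IsBaseCollection {α : Type*} (E : Set α) (ℬ : Set (Set α)) : Prop :=
  ∃ N : Matroid α, N.E = E ∧ ∀ B, N.IsBase B ↔ B ∈ ℬ

/-- The union of the blocks `E_i` with `lo ≤ i < hi` (`i` is a 0-based index, so the paper's
`E_1 ∪ ⋯ ∪ E_j` is `blockU E 0 j`). -/
def blockU {α : Type*} {t : ℕ} (E : Fin t → Set α) (lo hi : ℕ) : Set α :=
  ⋃ i ∈ {i : Fin t | lo ≤ (i : ℕ) ∧ (i : ℕ) < hi}, E i

/-- The sum of the integers `a_i` with `lo ≤ i < hi` (0-based), so the paper's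
`a_1 + ⋯ + a_j` is `blockSum a 0 j`. -/
def blockSum {t : ℕ} (a : Fin t → ℕ) (lo hi : ℕ) : ℕ :=
  ∑ i ∈ Finset.univ.filter (fun i : Fin t => lo ≤ (i : ℕ) ∧ (i : ℕ) < hi), a i

/-- A good `t`-partition of a rank-`r` matroid `M`: the ground set is partitioned into blocks
`E_1, …, E_t` (here indexed by `Fin t`) with `r(M|E_i) > 1`, together with integers
`0 < a_i < r(M|E_i)` such that `(P1)` `r = a_1 + ⋯ + a_t` and conditions `(P2a)`,`(P2b)` hold. -/
def IsGoodPartition {α : Type*} {t : ℕ} (M : Matroid α) (r : ℕ)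
    (E : Fin t → Set α) (a : Fin t → ℕ) : Prop :=
  (⋃ i, E i) = M.E ∧
  Pairwise (Function.onFun Disjoint E) ∧
  (∀ i, 1 < mrk (M ↾ E i)) ∧
  (∀ i, 0 < a i ∧ a i < mrk (M ↾ E i)) ∧
  r = (∑ i, a i) ∧
  (∀ j : ℕ, 1 ≤ j → j ≤ t - 1 → ∀ X Y : Set α,
    (M ↾ blockU E 0 j).Indep X → X.ncard ≤ blockSum a 0 j →
    (M ↾ blockU E j t).Indep Y → Y.ncard ≤ blockSum a j t →
    M.Indep (X ∪ Y)) ∧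
  (∀ j k : ℕ, 1 ≤ j → j < k → k ≤ t - 1 → ∀ X Y Z : Set α,
    (M ↾ blockU E 0 j).Indep X → X.ncard ≤ blockSum a 0 j →
    (M ↾ blockU E j k).Indep Y → Y.ncard ≤ blockSum a j k →
    (M ↾ blockU E k t).Indep Z → Z.ncard ≤ blockSum a k t →
    M.Indep (X ∪ Y ∪ Z))

/-!
Write `S = E₁` and `k = a₁`. By (P2a) with `j = 1`, an independent `k`-subset of `S` together with
an independent `(r - k)`-subset of `E - S` is a base of `M`. This is what makes basis exchange work
inside the family: if `B₁` meets `S` in exactly `k` elements and the outgoing element `e` lies in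
`S`, augment `(B₁ ∩ S) - e` from `B₂ ∩ S` to get `f ∈ S`, and `B₁ - e + f` is again such a union;
otherwise ordinary basis exchange keeps `|B ∩ S| ≥ k`. The family is nonempty because such a pair
of sets exists, the one in `E₂ ∪ ⋯ ∪ E_t` being assembled block by block with (P2b).
-/

namespace Matroid

variable {α : Type*} {M : Matroid α} {B B₁ B₂ I S : Set α} {k m : ℕ}

lemma isGreatest_ncard_indep [M.RankFinite] (hB : M.IsBase B) :
    IsGreatest {n | ∃ I, M.Indep I ∧ I.ncard = n} B.ncard := by
  refine ⟨⟨B, hB.indep, rfl⟩, ?_⟩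
  rintro _ ⟨I, hI, rfl⟩
  obtain ⟨B', hB', hIB'⟩ := hI.exists_isBase_superset
  rw [hB.ncard_eq_ncard_of_isBase hB']
  exact ncard_le_ncard hIB' hB'.finite

lemma IsBase.ncard_eq_mrk [M.RankFinite] (hB : M.IsBase B) : B.ncard = mrk M :=
  (isGreatest_ncard_indep hB).csSup_eq.symm

lemma Indep.ncard_le_mrk [M.RankFinite] (hI : M.Indep I) : I.ncard ≤ mrk M := by
  obtain ⟨B, hB⟩ := M.exists_isBase
  exact hB.ncard_eq_mrk ▸ (isGreatest_ncard_indep hB).2 ⟨I, hI, rfl⟩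

lemma Indep.isBase_of_ncard_eq_mrk [M.RankFinite] (hI : M.Indep I) (hcard : I.ncard = mrk M) :
    M.IsBase I := by
  obtain ⟨B, hB, hIB⟩ := hI.exists_isBase_superset
  rwa [eq_of_subset_of_ncard_le hIB (hcard.trans hB.ncard_eq_mrk.symm).ge hB.finite]

lemma exists_indep_ncard_eq_of_le_mrk [M.RankFinite] (hm : m ≤ mrk M) :
    ∃ I, M.Indep I ∧ I.ncard = m := by
  obtain ⟨B, hB⟩ := M.exists_isBase
  obtain ⟨I, hIB, hI⟩ := exists_subset_card_eq (hB.ncard_eq_mrk ▸ hm)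
  exact ⟨I, hB.indep.subset hIB, hI⟩

section

variable [M.RankFinite]
  (hunion : ∀ X Y, M.Indep X → X ⊆ S → X.ncard = k →
    M.Indep Y → Y ⊆ M.E \ S → Y.ncard = mrk M - k → M.Indep (X ∪ Y))
include hunion

lemma IsBase.exists_exchange_mem_of_ncard_inter_eq (hB₁ : M.IsBase B₁) (hB₂ : M.IsBase B₂)
    (hB₁S : (B₁ ∩ S).ncard = k) (hB₂S : k ≤ (B₂ ∩ S).ncard) {e : α} (he : e ∈ B₁ \ B₂)
    (heS : e ∈ S) : ∃ f ∈ B₂ \ B₁, f ∈ S ∧ M.IsBase (insert f (B₁ \ {e})) := by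
  have heB₁S : e ∈ B₁ ∩ S := ⟨he.1, heS⟩
  have hlt : ((B₁ ∩ S) \ {e}).encard < (B₂ ∩ S).encard := by
    rw [← (hB₁.finite.inter_of_left S).sdiff.cast_ncard_eq,
      ← (hB₂.finite.inter_of_left S).cast_ncard_eq]
    exact_mod_cast (ncard_sdiff_singleton_lt_of_mem heB₁S (hB₁.finite.inter_of_left S)).trans_le
      (hB₁S ▸ hB₂S)
  obtain ⟨f, ⟨⟨hfB₂, hfS⟩, hfX⟩, hX⟩ :=
    (hB₁.indep.subset (sdiff_subset.trans inter_subset_left)).augment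
      (hB₂.indep.subset inter_subset_left) hlt
  have hfB₁ : f ∉ B₁ := fun h ↦ hfX ⟨⟨h, hfS⟩, fun hfe ↦ he.2 (hfe ▸ hfB₂)⟩
  have hY : (B₁ \ S).ncard = mrk M - k := by
    have := ncard_inter_add_ncard_sdiff_eq_ncard B₁ S hB₁.finite
    rw [hB₁.ncard_eq_mrk] at this
    omega
  have hunion' := hunion _ _ hX (insert_subset hfS (sdiff_subset.trans inter_subset_right))
    (by rw [ncard_exchange (fun h ↦ hfB₁ h.1) heB₁S, hB₁S]) (hB₁.indep.subset sdiff_subset)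
    (sdiff_subset_sdiff_left hB₁.subset_ground) hY
  have hset : insert f ((B₁ ∩ S) \ {e}) ∪ B₁ \ S = insert f (B₁ \ {e}) := by
    ext x
    by_cases hxS : x ∈ S <;> by_cases hxe : x = e <;> simp [hxS, hxe, heS]
  refine ⟨f, ⟨hfB₂, hfB₁⟩, hfS, hset ▸ hunion'.isBase_of_ncard_eq_mrk ?_⟩
  rw [hset, ncard_exchange hfB₁ he.1, hB₁.ncard_eq_mrk]

lemma exchangeProperty_isBase_ncard_inter_ge :
    ExchangeProperty (fun B ↦ M.IsBase B ∧ k ≤ (B ∩ S).ncard) := by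
  rintro B₁ B₂ ⟨hB₁, hB₁S⟩ ⟨hB₂, hB₂S⟩ e he
  by_cases htight : e ∈ S ∧ (B₁ ∩ S).ncard = k
  · obtain ⟨f, hf, hfS, hB⟩ :=
      hB₁.exists_exchange_mem_of_ncard_inter_eq hunion hB₂ htight.2 hB₂S he htight.1
    refine ⟨f, hf, hB, ?_⟩
    have heB₁S : e ∈ B₁ ∩ S := ⟨he.1, htight.1⟩
    calc k = (insert f ((B₁ ∩ S) \ {e})).ncard := by
          rw [ncard_exchange (fun h ↦ hf.2 h.1) heB₁S, htight.2]
      _ ≤ (insert f (B₁ \ {e}) ∩ S).ncard := by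
          refine ncard_le_ncard ?_ (hB.finite.inter_of_left S)
          rintro x (rfl | ⟨⟨hx, hxS⟩, hxe⟩)
          exacts [⟨mem_insert x _, hfS⟩, ⟨mem_insert_of_mem f ⟨hx, hxe⟩, hxS⟩]
  · obtain ⟨f, hf, hB⟩ := hB₁.exchange hB₂ he
    refine ⟨f, hf, hB, ?_⟩
    have hk : k ≤ ((B₁ ∩ S) \ {e}).ncard := by
      by_cases heS : e ∈ S
      · rw [ncard_sdiff_singleton_of_mem (show e ∈ B₁ ∩ S from ⟨he.1, heS⟩)]
        have := hB₁S.lt_of_ne fun h ↦ htight ⟨heS, h.symm⟩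
        omega
      · rwa [sdiff_singleton_eq_self fun h ↦ heS h.2]
    refine hk.trans (ncard_le_ncard ?_ (hB.finite.inter_of_left S))
    rintro x ⟨⟨hx, hxS⟩, hxe⟩
    exact ⟨mem_insert_of_mem f ⟨hx, hxe⟩, hxS⟩

lemma isBaseCollection_setOf_isBase_ncard_inter_ge {X Y : Set α} (hX : M.Indep X) (hXS : X ⊆ S)
    (hXk : X.ncard = k) (hY : M.Indep Y) (hYS : Y ⊆ M.E \ S) (hYk : Y.ncard = mrk M - k) :
    IsBaseCollection M.E {B | M.IsBase B ∧ k ≤ (B ∩ S).ncard} := by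
  have hXY := hunion X Y hX hXS hXk hY hYS hYk
  have hdisj : Disjoint X Y := disjoint_of_subset_left hXS (subset_sdiff.1 hYS).2.symm
  have hcard : (X ∪ Y).ncard = k + (mrk M - k) := by
    rw [ncard_union_eq hdisj hX.finite hY.finite, hXk, hYk]
  have hbase : M.IsBase (X ∪ Y) :=
    hXY.isBase_of_ncard_eq_mrk (le_antisymm hXY.ncard_le_mrk (by omega))
  have hinter : (X ∪ Y) ∩ S = X := by
    rw [union_inter_distrib_right, inter_eq_self_of_subset_left hXS,
      (subset_sdiff.1 hYS).2.inter_eq, union_empty]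
  refine ⟨Matroid.ofExistsFiniteIsBase M.E _ ⟨X ∪ Y, ⟨hbase, by rw [hinter, hXk]⟩, hbase.finite⟩
    (exchangeProperty_isBase_ncard_inter_ge hunion) fun B hB ↦ hB.1.subset_ground, rfl,
    fun B ↦ Iff.rfl⟩

end

end Matroid

section Blocks

variable {α : Type*} {t : ℕ}

lemma blockU_split (E : Fin t → Set α) {lo mid hi : ℕ} (h₁ : lo ≤ mid) (h₂ : mid ≤ hi) :
    blockU E lo hi = blockU E lo mid ∪ blockU E mid hi := by
  ext x
  simp only [blockU, mem_union, mem_iUnion, mem_ofPred_eq, exists_prop]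
  constructor
  · rintro ⟨i, hi, hx⟩
    by_cases him : (i : ℕ) < mid
    exacts [Or.inl ⟨i, ⟨hi.1, him⟩, hx⟩, Or.inr ⟨i, ⟨by omega, hi.2⟩, hx⟩]
  · rintro (⟨i, hi, hx⟩ | ⟨i, hi, hx⟩)
    exacts [⟨i, ⟨hi.1, by omega⟩, hx⟩, ⟨i, ⟨by omega, hi.2⟩, hx⟩]

lemma blockSum_split (a : Fin t → ℕ) {lo mid hi : ℕ} (h₁ : lo ≤ mid) (h₂ : mid ≤ hi) :
    blockSum a lo hi = blockSum a lo mid + blockSum a mid hi := by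
  unfold blockSum
  rw [← Finset.sum_union (Finset.disjoint_filter.2 fun i _ hi ↦ by omega)]
  congr 1
  ext i
  simp only [Finset.mem_union, Finset.mem_filter, Finset.mem_univ, true_and]
  omega

lemma blockU_eq_block (E : Fin t → Set α) (i : Fin t) {hi : ℕ} (h : (i : ℕ) + 1 = hi) :
    blockU E i hi = E i := by
  ext x
  simp only [blockU, mem_iUnion, mem_ofPred_eq, exists_prop]
  refine ⟨fun ⟨j, hj, hx⟩ ↦ ?_, fun hx ↦ ⟨i, ⟨le_rfl, by omega⟩, hx⟩⟩
  rwa [Fin.ext (by omega : (j : ℕ) = i)] at hx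

lemma blockSum_eq_term (a : Fin t → ℕ) (i : Fin t) {hi : ℕ} (h : (i : ℕ) + 1 = hi) :
    blockSum a i hi = a i := by
  rw [blockSum, Finset.sum_eq_single_of_mem i (by simp; omega) fun j hj hji ↦ ?_]
  simp only [Finset.mem_filter, Finset.mem_univ, true_and] at hj
  exact absurd (Fin.ext (by omega)) hji

lemma blockU_zero_eq_iUnion (E : Fin t → Set α) : blockU E 0 t = ⋃ i, E i := by
  simp [blockU]

lemma blockSum_zero_eq_sum (a : Fin t → ℕ) : blockSum a 0 t = ∑ i, a i := by
  simp [blockSum]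

lemma disjoint_blockU {E : Fin t → Set α} (hE : Pairwise (Function.onFun Disjoint E))
    (lo mid hi : ℕ) :
    Disjoint (blockU E lo mid) (blockU E mid hi) := by
  simp only [blockU, disjoint_iUnion_left, disjoint_iUnion_right, mem_ofPred_eq]
  exact fun i hi j hj ↦ hE (Fin.ne_of_lt (by omega))

end Blocks

namespace IsGoodPartition

variable {α : Type*} {t r : ℕ} {M : Matroid α} {E : Fin t → Set α} {a : Fin t → ℕ}

lemma ground_sdiff_blockU (h : IsGoodPartition M r E a) {j : ℕ} (hj : j ≤ t) :
    M.E \ blockU E 0 j = blockU E j t := by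
  rw [← h.1, ← blockU_zero_eq_iUnion, blockU_split E (Nat.zero_le j) hj,
    union_sdiff_cancel_left (disjoint_blockU h.2.1 0 j t).le_bot]

lemma exists_indep_subset_block [M.RankFinite] (h : IsGoodPartition M r E a) (i : Fin t) :
    ∃ X, M.Indep X ∧ X ⊆ E i ∧ X.ncard = a i := by
  obtain ⟨X, hX, hXa⟩ := exists_indep_ncard_eq_of_le_mrk (h.2.2.2.1 i).2.le
  exact ⟨X, (restrict_indep_iff.1 hX).1, (restrict_indep_iff.1 hX).2, hXa⟩

lemma exists_indep_subset_blockU [M.RankFinite] (h : IsGoodPartition M r E a) {lo : ℕ}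
    (hlo : 1 ≤ lo) (hlot : lo < t) :
    ∃ W, M.Indep W ∧ W ⊆ blockU E lo t ∧ W.ncard = blockSum a lo t := by
  have hdisj := h.2.1
  have hP2b := h.2.2.2.2.2.2
  induction (Nat.le_sub_one_of_lt hlot : lo ≤ t - 1) using Nat.decreasingInduction with
  | self =>
    have ht : t - 1 + 1 = t := by omega
    obtain ⟨X, hX, hXE, hXa⟩ := h.exists_indep_subset_block ⟨t - 1, hlot⟩
    rw [blockU_eq_block E ⟨t - 1, hlot⟩ ht, blockSum_eq_term a ⟨t - 1, hlot⟩ ht]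
    exact ⟨X, hX, hXE, hXa⟩
  | of_succ k hk ih =>
    obtain ⟨W, hW, hWE, hWa⟩ := ih (by omega) (by omega)
    obtain ⟨X, hX, hXE, hXa⟩ := h.exists_indep_subset_block ⟨k, hlot⟩
    have hXE' : X ⊆ blockU E k (k + 1) := (blockU_eq_block E ⟨k, hlot⟩ rfl).symm ▸ hXE
    have hXW : M.Indep (∅ ∪ X ∪ W) :=
      hP2b k (k + 1) hlo k.lt_succ_self (by omega) ∅ X W (empty_indep _) (by simp)
        (restrict_indep_iff.2 ⟨hX, hXE'⟩) (by rw [blockSum_eq_term a ⟨k, hlot⟩ rfl, hXa])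
        (restrict_indep_iff.2 ⟨hW, hWE⟩) hWa.le
    rw [empty_union] at hXW
    refine ⟨X ∪ W, hXW, ?_, ?_⟩
    · rw [blockU_split E k.le_succ (by omega : k + 1 ≤ t)]
      exact union_subset_union hXE' hWE
    · rw [ncard_union_eq ((disjoint_blockU hdisj _ _ _).mono hXE' hWE) hX.finite hW.finite,
        blockSum_split a k.le_succ (by omega : k + 1 ≤ t), blockSum_eq_term a ⟨k, hlot⟩ rfl, hXa,
        hWa]

end IsGoodPartition

/-- for a good `t`-partition of `M`, the family
`ℬ(M̄₁) = {B base of M : |B ∩ E₁| ≥ a₁}` is the collection of bases of a matroid on `E`.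
(Here `blockU E 0 1` is the first block `E₁` and `blockSum a 0 1 = a₁`.) -/
theorem statement3 {α : Type*} {t : ℕ} (ht : 2 ≤ t) (M : Matroid α) (hfin : M.E.Finite)
    (r : ℕ) (hrank : mrk M = r) (E : Fin t → Set α) (a : Fin t → ℕ)
    (hgood : IsGoodPartition M r E a) :
    IsBaseCollection M.E {B | M.IsBase B ∧ blockSum a 0 1 ≤ (B ∩ blockU E 0 1).ncard} := by
  have : M.Finite := ⟨hfin⟩
  have hsum := hgood.2.2.2.2.1
  have hP2a := hgood.2.2.2.2.2.1
  have hE₀ : blockU E 0 1 = E ⟨0, by omega⟩ := blockU_eq_block E ⟨0, _⟩ rfl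
  have ha₀ : blockSum a 0 1 = a ⟨0, by omega⟩ := blockSum_eq_term a ⟨0, _⟩ rfl
  have hrest : M.E \ blockU E 0 1 = blockU E 1 t := hgood.ground_sdiff_blockU (by omega)
  have hrank_rest : mrk M - blockSum a 0 1 = blockSum a 1 t := by
    rw [hrank, hsum, ← blockSum_zero_eq_sum, blockSum_split a zero_le_one (by omega)]
    omega
  obtain ⟨X, hX, hXE, hXa⟩ := hgood.exists_indep_subset_block ⟨0, by omega⟩
  obtain ⟨Y, hY, hYE, hYa⟩ := hgood.exists_indep_subset_blockU le_rfl (by omega)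
  refine isBaseCollection_setOf_isBase_ncard_inter_ge (fun X Y hX hXE hXa hY hYE hYa ↦ ?_)
    hX (hE₀ ▸ hXE) (ha₀ ▸ hXa) hY (hrest ▸ hYE) (hrank_rest ▸ hYa)
  exact hP2a 1 le_rfl (by omega) X Y (restrict_indep_iff.2 ⟨hX, hXE⟩) hXa.le
    (restrict_indep_iff.2 ⟨hY, hrest ▸ hYE⟩) (hrank_rest ▸ hYa).le
end

section
/- Let t ≥ 2, let M be a matroid of rank r on E, and let E = E_1 ∪ ⋯ ∪ E_t be a good t-partition with integers a_1,…,a_t. For 1 ≤ j ≤ t let M_j be the matroid with bases B(M_1) = {B a base of M : |B ∩ E_1| ≤ a_1} and, for j ≥ 2, B(M_j) = {B a base of M : |B ∩ (E_1∪⋯∪E_h)| ≥ a_1+⋯+a_h for every 1 ≤ h ≤ j−1, and |B ∩ (E_1∪⋯∪E_j)| ≤ a_1+⋯+a_j}. Then for every 1 ≤ j < k ≤ t, the intersection B(M_j) ∩ B(M_k) equals the set of bases B of M that satisfy: |B ∩ (E_1∪⋯∪E_h)| ≥ a_1+⋯+a_h for all 1 ≤ h ≤ k with h ∉ {j,k},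 |B ∩ (E_1∪⋯∪E_j)| = a_1+⋯+a_j, and |B ∩ (E_1∪⋯∪E_k)| ≤ a_1+⋯+a_k; moreover B(M_j) ∩ B(M_k) satisfies the basis exchange axiom, i.e., it is the collection of bases of a matroid on E whenever it is nonempty. -/
open Matroid Set

/-- The family `ℬ(M_j)` from the paper : bases `B` of `M` with
`|B ∩ (E_1 ∪ ⋯ ∪ E_h)| ≥ a_1 + ⋯ + a_h` for every `1 ≤ h ≤ j - 1`, and
`|B ∩ (E_1 ∪ ⋯ ∪ E_j)| ≤ a_1 + ⋯ + a_j`. -/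
def BFam {α : Type*} {t : ℕ} (M : Matroid α) (E : Fin t → Set α) (a : Fin t → ℕ)
    (j : ℕ) : Set (Set α) :=
  {B | M.IsBase B ∧
    (∀ h : ℕ, 1 ≤ h → h ≤ j - 1 → blockSum a 0 h ≤ (B ∩ blockU E 0 h).ncard) ∧
    (B ∩ blockU E 0 j).ncard ≤ blockSum a 0 j}

/-!
Write `U_h = E_1 ∪ ⋯ ∪ E_h`, `c_h(B) = |B ∩ U_h|` and `s_h = a_1 + ⋯ + a_h`; call a base `B`
tight at `h` if `c_h(B) = s_h`. Given `e ∈ B₁ \ B₂`, pick a window `l < m` with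
`e ∈ U_m \ U_l`, `B₁` tight at `l` and `m`, `c_l(B₂) ≤ s_l` and `c_m(B₂) ≥ s_m`. Inside the
window `B₂` then has more elements than `B₁ - e`, so augmentation produces `g ∈ B₂ \ B₁`, and
(P2a)/(P2b) glue `B₁ ∩ U_l`, the augmented middle part and `B₁ \ U_m` into an independent set
of size `r`, i.e. the base `B₁ - e + g`. The exchange changes `c_h` by at most one, and only for
`l < h < m`. Taking for `l` the last of `0, j, k` with `e ∉ U_l` at which `B₁` is tight, and
for `m` the first index after `l` that is `t` or is below `k`, contains `e` and is tight for `B₁`,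
no constraint of `ℬ(M_j) ∩ ℬ(M_k)` is violated inside the window. On a finite ground set, a
nonempty family with the exchange property is the family of bases of a matroid.
-/

section blocks

variable {α : Type*} {t : ℕ} {E : Fin t → Set α} {a : Fin t → ℕ}

lemma mem_blockU {lo hi : ℕ} {x : α} :
    x ∈ blockU E lo hi ↔ ∃ i : Fin t, lo ≤ (i : ℕ) ∧ (i : ℕ) < hi ∧ x ∈ E i := by
  simp only [blockU, mem_iUnion, mem_ofPred_eq, exists_prop, and_assoc]

@[simp] lemma blockU_self (l : ℕ) : blockU E l l = ∅ :=
  eq_empty_iff_forall_notMem.2 fun _ hx => by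
    obtain ⟨i, h₁, h₂, -⟩ := mem_blockU.1 hx
    omega

lemma blockU_mono_right {lo l m : ℕ} (h : l ≤ m) : blockU E lo l ⊆ blockU E lo m := fun _ hx => by
  obtain ⟨i, h₁, h₂, hx⟩ := mem_blockU.1 hx
  exact mem_blockU.2 ⟨i, h₁, by omega, hx⟩

lemma blockU_sdiff_subset {lo l m : ℕ} : blockU E lo m \ blockU E lo l ⊆ blockU E l m := by
  rintro x ⟨hxm, hxl⟩
  obtain ⟨i, h₁, h₂, hx⟩ := mem_blockU.1 hxm
  refine mem_blockU.2 ⟨i, ?_, h₂, hx⟩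
  by_contra! hil
  exact hxl (mem_blockU.2 ⟨i, h₁, hil, hx⟩)

lemma blockU_zero_top : blockU E 0 t = ⋃ i, E i := by
  ext x
  simp only [mem_blockU, mem_iUnion]
  exact ⟨fun ⟨i, _, _, hx⟩ => ⟨i, hx⟩, fun ⟨i, hx⟩ => ⟨i, Nat.zero_le _, i.isLt, hx⟩⟩

@[simp] lemma blockSum_self (l : ℕ) : blockSum a l l = 0 :=
  Finset.sum_eq_zero fun i hi => by
    simp only [Finset.mem_filter, Finset.mem_univ, true_and] at hi
    omega

lemma blockSum_add_blockSum {lo l m : ℕ} (hlo : lo ≤ l) (hlm : l ≤ m) :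
    blockSum a lo l + blockSum a l m = blockSum a lo m := by
  classical
  rw [blockSum, blockSum, blockSum, ← Finset.sum_union]
  · congr 1
    ext i
    simp only [Finset.mem_union, Finset.mem_filter, Finset.mem_univ, true_and]
    omega
  · rw [Finset.disjoint_left]
    intro i hi₁ hi₂
    simp only [Finset.mem_filter, Finset.mem_univ, true_and] at hi₁ hi₂
    omega

lemma blockSum_zero_top : blockSum a 0 t = ∑ i, a i := by
  rw [blockSum]
  congr 1
  ext i
  simp

end blocks

open Classical in
lemma ncard_insert_sdiff_inter_add {α : Type*} {B U : Set α} {e g : α} (hB : B.Finite)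
    (he : e ∈ B) (hg : g ∉ B) :
    (insert g (B \ {e}) ∩ U).ncard + (if e ∈ U then 1 else 0) =
      (B ∩ U).ncard + (if g ∈ U then 1 else 0) := by
  have hBU : (B ∩ U).Finite := hB.inter_of_left U
  have hdiff : ((B ∩ U) \ {e}).ncard + (if e ∈ U then 1 else 0) = (B ∩ U).ncard := by
    split_ifs with heU
    · exact ncard_sdiff_singleton_add_one ⟨he, heU⟩ hBU
    · rw [sdiff_singleton_eq_self fun h => heU h.2, add_zero]
  by_cases hgU : g ∈ U
  · rw [insert_inter_of_mem hgU, ← inter_sdiff_right_comm,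
      ncard_insert_of_notMem (fun h => hg h.1.1) hBU.sdiff, if_pos hgU]
    omega
  · rw [insert_inter_of_notMem hgU, ← inter_sdiff_right_comm, if_neg hgU]
    omega

lemma inter_union_insert_union_sdiff {α : Type*} {B U V : Set α} {e g : α} (hUV : U ⊆ V)
    (he : e ∈ V \ U) : B ∩ U ∪ insert g ((B ∩ (V \ U)) \ {e}) ∪ B \ V = insert g (B \ {e}) := by
  ext x
  by_cases hxe : x = e
  · subst hxe
    simp [he.1, he.2, eq_comm]
  · have hUVx := @hUV x
    simp only [mem_union, mem_inter_iff, mem_insert_iff, mem_sdiff, mem_singleton_iff]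
    tauto

section bases

variable {α : Type*} {M : Matroid α} {B I : Set α}

lemma Matroid.IsBase.ncard_eq_mrk_s5 (hfin : M.E.Finite) (hB : M.IsBase B) : B.ncard = mrk M := by
  refine (IsGreatest.csSup_eq (s := {n | ∃ I, M.Indep I ∧ I.ncard = n})
    ⟨⟨B, hB.indep, rfl⟩, ?_⟩).symm
  rintro _ ⟨I, hI, rfl⟩
  obtain ⟨B', hB', hIB'⟩ := hI.exists_isBase_superset
  exact (ncard_le_ncard hIB' (hfin.subset hB'.subset_ground)).trans
    (hB'.ncard_eq_ncard_of_isBase hB).le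

lemma Matroid.Indep.isBase_of_ncard_eq (hfin : M.E.Finite) (hI : M.Indep I) (hB : M.IsBase B)
    (h : I.ncard = B.ncard) : M.IsBase I := by
  obtain ⟨B', hB', hIB'⟩ := hI.exists_isBase_superset
  rwa [eq_of_subset_of_ncard_le hIB' (by rw [h, hB'.ncard_eq_ncard_of_isBase hB])
    (hfin.subset hB'.subset_ground)]

end bases

namespace IsGoodPartition

variable {α : Type*} {t : ℕ} {M : Matroid α} {r : ℕ} {E : Fin t → Set α} {a : Fin t → ℕ}

lemma ground_eq_blockU (hgood : IsGoodPartition M r E a) : M.E = blockU E 0 t :=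
  (blockU_zero_top.trans hgood.1).symm

lemma ncard_isBase (hgood : IsGoodPartition M r E a) (hfin : M.E.Finite) (hrank : mrk M = r)
    {B : Set α} (hB : M.IsBase B) : B.ncard = blockSum a 0 t := by
  rw [hB.ncard_eq_mrk_s5 hfin, hrank, hgood.2.2.2.2.1, blockSum_zero_top]

lemma indep_inter_union_union_sdiff (hgood : IsGoodPartition M r E a) (hfin : M.E.Finite)
    (hrank : mrk M = r) {B : Set α} (hB : M.IsBase B) {l m : ℕ} (hlm : l < m) (hmt : m ≤ t)
    (hBl : (B ∩ blockU E 0 l).ncard ≤ blockSum a 0 l)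
    (hBm : blockSum a 0 m ≤ (B ∩ blockU E 0 m).ncard)
    {Y : Set α} (hY : M.Indep Y) (hYW : Y ⊆ blockU E 0 m \ blockU E 0 l)
    (hYcard : Y.ncard ≤ blockSum a l m) :
    M.Indep (B ∩ blockU E 0 l ∪ Y ∪ B \ blockU E 0 m) := by
  have hBt : B ⊆ blockU E 0 t := hgood.ground_eq_blockU ▸ hB.subset_ground
  have hX : (M ↾ blockU E 0 l).Indep (B ∩ blockU E 0 l) :=
    restrict_indep_iff.2 ⟨hB.indep.subset inter_subset_left, inter_subset_right⟩
  have hY' : (M ↾ blockU E l m).Indep Y :=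
    restrict_indep_iff.2 ⟨hY, hYW.trans blockU_sdiff_subset⟩
  have hZ : (M ↾ blockU E m t).Indep (B \ blockU E 0 m) :=
    restrict_indep_iff.2 ⟨hB.indep.subset sdiff_subset,
      fun x hx => blockU_sdiff_subset ⟨hBt hx.1, hx.2⟩⟩
  have hZcard : (B \ blockU E 0 m).ncard ≤ blockSum a m t := by
    have hsplit := ncard_inter_add_ncard_sdiff_eq_ncard B (blockU E 0 m)
      (hfin.subset hB.subset_ground)
    have hsum := blockSum_add_blockSum (a := a) (Nat.zero_le m) hmt
    have := hgood.ncard_isBase hfin hrank hB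
    omega
  obtain ⟨-, -, -, -, -, hP2a, hP2b⟩ := hgood
  rcases Nat.eq_zero_or_pos l with rfl | hl <;> rcases hmt.lt_or_eq with hmt | rfl
  · simpa using hP2a m hlm (by omega) Y _ hY' hYcard hZ hZcard
  · simpa [sdiff_eq_empty.2 hBt] using hY
  · exact hP2b l m hl hlm (by omega) _ Y _ hX hBl hY' hYcard hZ hZcard
  · simpa [sdiff_eq_empty.2 hBt] using hP2a l hl (by omega) _ Y hX hBl hY' hYcard

lemma exists_isBase_insert_sdiff_of_window (hgood : IsGoodPartition M r E a)
    (hfin : M.E.Finite) (hrank : mrk M = r) {B₁ B₂ : Set α} (hB₁ : M.IsBase B₁)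
    (hB₂ : M.IsBase B₂) {l m : ℕ} (hlm : l < m) (hmt : m ≤ t)
    (hB₁l : (B₁ ∩ blockU E 0 l).ncard = blockSum a 0 l)
    (hB₁m : (B₁ ∩ blockU E 0 m).ncard = blockSum a 0 m)
    (hB₂l : (B₂ ∩ blockU E 0 l).ncard ≤ blockSum a 0 l)
    (hB₂m : blockSum a 0 m ≤ (B₂ ∩ blockU E 0 m).ncard)
    {e : α} (he : e ∈ B₁ \ B₂) (heW : e ∈ blockU E 0 m \ blockU E 0 l) :
    ∃ g ∈ B₂ \ B₁, g ∈ blockU E 0 m \ blockU E 0 l ∧ M.IsBase (insert g (B₁ \ {e})) := by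
  set W := blockU E 0 m \ blockU E 0 l
  have hwindow (B : Set α) (hB : B.Finite) :
      (B ∩ blockU E 0 l).ncard + (B ∩ W).ncard = (B ∩ blockU E 0 m).ncard := by
    have := ncard_inter_add_ncard_sdiff_eq_ncard (B ∩ blockU E 0 m) (blockU E 0 l)
      (hB.inter_of_left _)
    rwa [inter_assoc, inter_eq_right.2 (blockU_mono_right hlm.le), inter_sdiff_assoc] at this
  have hB₁fin := hfin.subset hB₁.subset_ground
  have h₁ := hwindow B₁ hB₁fin
  have h₂ := hwindow B₂ (hfin.subset hB₂.subset_ground)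
  have hsum := blockSum_add_blockSum (a := a) (Nat.zero_le l) hlm.le
  have heB₁W : e ∈ B₁ ∩ W := ⟨he.1, heW⟩
  have hcard : ((B₁ ∩ W) \ {e}).ncard + 1 = (B₁ ∩ W).ncard :=
    ncard_sdiff_singleton_add_one heB₁W (hB₁fin.inter_of_left W)
  obtain ⟨g, ⟨⟨hgB₂, hgW⟩, hgY⟩, hind⟩ :=
    (hB₁.indep.subset (sdiff_subset.trans inter_subset_left)).augment
      (hB₂.indep.subset (inter_subset_left (t := W))) (by
        rw [← (hB₁fin.inter_of_left W).sdiff.cast_ncard_eq,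
          ← ((hfin.subset hB₂.subset_ground).inter_of_left W).cast_ncard_eq]
        exact_mod_cast (by omega : ((B₁ ∩ W) \ {e}).ncard < (B₂ ∩ W).ncard))
  have hge : g ≠ e := fun h => he.2 (h ▸ hgB₂)
  have hgB₁ : g ∉ B₁ := fun h => hgY ⟨⟨h, hgW⟩, hge⟩
  have hglued := hgood.indep_inter_union_union_sdiff hfin hrank hB₁ hlm hmt hB₁l.le hB₁m.ge hind
    (insert_subset hgW (sdiff_subset.trans inter_subset_right))
    (by rw [ncard_exchange (fun h => hgB₁ h.1) heB₁W]; omega)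
  refine ⟨g, ⟨hgB₂, hgB₁⟩, hgW, ?_⟩
  rw [inter_union_insert_union_sdiff (blockU_mono_right hlm.le) heW] at hglued
  exact hglued.isBase_of_ncard_eq hfin hB₁ (ncard_exchange hgB₁ he.1)

end IsGoodPartition

section BFam

variable {α : Type*} {t : ℕ} {M : Matroid α} {E : Fin t → Set α} {a : Fin t → ℕ} {j k : ℕ}

lemma ncard_inter_blockU_eq_of_mem_BFam_inter (hjk : j < k) {B : Set α}
    (hB : B ∈ BFam M E a j ∩ BFam M E a k) : (B ∩ blockU E 0 j).ncard = blockSum a 0 j := by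
  obtain ⟨⟨-, -, hBj⟩, -, hlow, -⟩ := hB
  rcases Nat.eq_zero_or_pos j with rfl | hj
  · simp
  · exact hBj.antisymm (hlow j hj (by omega))

lemma mem_BFam_inter_of (hjk : j < k) {B : Set α} (hB : M.IsBase B)
    (hlow : ∀ h, 1 ≤ h → h < k → blockSum a 0 h ≤ (B ∩ blockU E 0 h).ncard)
    (hBj : (B ∩ blockU E 0 j).ncard ≤ blockSum a 0 j)
    (hBk : (B ∩ blockU E 0 k).ncard ≤ blockSum a 0 k) :
    B ∈ BFam M E a j ∩ BFam M E a k :=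
  ⟨⟨hB, fun h h₁ hhj => hlow h h₁ (by omega), hBj⟩, hB, fun h h₁ hhk => hlow h h₁ (by omega), hBk⟩

lemma BFam_inter_BFam_eq (hjk : j < k) :
    BFam M E a j ∩ BFam M E a k =
      {B | M.IsBase B ∧
        (∀ h : ℕ, 1 ≤ h → h ≤ k → h ≠ j → h ≠ k →
          blockSum a 0 h ≤ (B ∩ blockU E 0 h).ncard) ∧
        (B ∩ blockU E 0 j).ncard = blockSum a 0 j ∧
        (B ∩ blockU E 0 k).ncard ≤ blockSum a 0 k} := by
  ext B
  refine ⟨fun hB => ?_, fun ⟨hB, hlow, hBj, hBk⟩ => mem_BFam_inter_of hjk hB (fun h h₁ hhk => ?_)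
    hBj.le hBk⟩
  · obtain ⟨hB', hlow, hBk⟩ := hB.2
    exact ⟨hB', fun h h₁ hhk _ hhk' => hlow h h₁ (by omega),
      ncard_inter_blockU_eq_of_mem_BFam_inter hjk hB, hBk⟩
  · rcases eq_or_ne h j with rfl | hhj
    · exact hBj.ge
    · exact hlow h h₁ hhk.le hhj hhk.ne

lemma IsGoodPartition.exists_exchange_of_window {r : ℕ} (hgood : IsGoodPartition M r E a)
    (hfin : M.E.Finite) (hrank : mrk M = r) (hjk : j < k) {B₁ B₂ : Set α}
    (hB₁ : B₁ ∈ BFam M E a j ∩ BFam M E a k) (hB₂ : B₂ ∈ BFam M E a j ∩ BFam M E a k)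
    {e : α} (he : e ∈ B₁ \ B₂) {l m : ℕ} (hlm : l < m) (hmt : m ≤ t)
    (heW : e ∈ blockU E 0 m \ blockU E 0 l)
    (hB₁l : (B₁ ∩ blockU E 0 l).ncard = blockSum a 0 l)
    (hB₁m : (B₁ ∩ blockU E 0 m).ncard = blockSum a 0 m)
    (hB₂l : (B₂ ∩ blockU E 0 l).ncard ≤ blockSum a 0 l)
    (hB₂m : blockSum a 0 m ≤ (B₂ ∩ blockU E 0 m).ncard)
    (hslack : ∀ h, l < h → h < m → h < k → e ∈ blockU E 0 h →
      blockSum a 0 h < (B₁ ∩ blockU E 0 h).ncard)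
    (hroom : ∀ h, l < h → h < m → (h = j ∨ h = k) →
      e ∈ blockU E 0 h ∨ (B₁ ∩ blockU E 0 h).ncard < blockSum a 0 h) :
    ∃ f ∈ B₂ \ B₁, insert f (B₁ \ {e}) ∈ BFam M E a j ∩ BFam M E a k := by
  classical
  obtain ⟨g, hg, hgW, hbase⟩ := hgood.exists_isBase_insert_sdiff_of_window hfin hrank hB₁.1.1
    hB₂.1.1 hlm hmt hB₁l hB₁m hB₂l hB₂m he heW
  have hcount (h : ℕ) := ncard_insert_sdiff_inter_add (U := blockU E 0 h)
    (hfin.subset hB₁.1.1.subset_ground) he.1 hg.2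
  have houtside (h : ℕ) (hh : h ≤ l ∨ m ≤ h) :
      (insert g (B₁ \ {e}) ∩ blockU E 0 h).ncard = (B₁ ∩ blockU E 0 h).ncard := by
    have hc := hcount h
    rcases hh with hhl | hmh
    · rw [if_neg fun h' => heW.2 (blockU_mono_right hhl h'),
        if_neg fun h' => hgW.2 (blockU_mono_right hhl h')] at hc
      omega
    · rw [if_pos (blockU_mono_right hmh heW.1), if_pos (blockU_mono_right hmh hgW.1)] at hc
      omega
  have hupper (h : ℕ) (hh : h = j ∨ h = k) (hle : (B₁ ∩ blockU E 0 h).ncard ≤ blockSum a 0 h) :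
      (insert g (B₁ \ {e}) ∩ blockU E 0 h).ncard ≤ blockSum a 0 h := by
    by_cases hin : l < h ∧ h < m
    · have hc := hcount h
      rcases hroom h hin.1 hin.2 hh with heU | hlt
      · rw [if_pos heU] at hc
        split_ifs at hc <;> omega
      · split_ifs at hc <;> omega
    · rw [houtside h (by omega)]
      exact hle
  refine ⟨g, hg, mem_BFam_inter_of hjk hbase (fun h h₁ hhk => ?_)
    (hupper j (.inl rfl) hB₁.1.2.2) (hupper k (.inr rfl) hB₁.2.2.2)⟩
  have hlow : blockSum a 0 h ≤ (B₁ ∩ blockU E 0 h).ncard := hB₁.2.2.1 h h₁ (by omega)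
  by_cases hin : l < h ∧ h < m
  · have hc := hcount h
    by_cases heU : e ∈ blockU E 0 h
    · have := hslack h hin.1 hin.2 hhk heU
      rw [if_pos heU] at hc
      split_ifs at hc <;> omega
    · rw [if_neg heU] at hc
      split_ifs at hc <;> omega
  · rw [houtside h (by omega)]
    exact hlow

lemma exists_window_start (hjk : j < k) (hk : k ≤ t) {B₁ B₂ : Set α}
    (hB₁ : B₁ ∈ BFam M E a j ∩ BFam M E a k) (hB₂ : B₂ ∈ BFam M E a j ∩ BFam M E a k)
    {e : α} (het : e ∈ blockU E 0 t) :
    ∃ l < t, e ∉ blockU E 0 l ∧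
      (B₁ ∩ blockU E 0 l).ncard = blockSum a 0 l ∧
      (B₂ ∩ blockU E 0 l).ncard ≤ blockSum a 0 l ∧
      (l < j → e ∈ blockU E 0 j) ∧
      (l < k → e ∈ blockU E 0 k ∨ (B₁ ∩ blockU E 0 k).ncard < blockSum a 0 k) := by
  by_cases hK : e ∉ blockU E 0 k ∧ (B₁ ∩ blockU E 0 k).ncard = blockSum a 0 k
  · refine ⟨k, lt_of_le_of_ne hk ?_, hK.1, hK.2, hB₂.2.2.2, fun h => absurd h (by omega),
      fun h => absurd h (lt_irrefl k)⟩
    rintro rfl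
    exact hK.1 het
  have hroom : e ∈ blockU E 0 k ∨ (B₁ ∩ blockU E 0 k).ncard < blockSum a 0 k :=
    (em _).imp_right fun heU => lt_of_le_of_ne hB₁.2.2.2 fun h => hK ⟨heU, h⟩
  by_cases hJ : e ∈ blockU E 0 j
  · exact ⟨0, by omega, by simp, by simp, by simp, fun _ => hJ, fun _ => hroom⟩
  · exact ⟨j, by omega, hJ, ncard_inter_blockU_eq_of_mem_BFam_inter hjk hB₁,
      (ncard_inter_blockU_eq_of_mem_BFam_inter hjk hB₂).le, fun h => absurd h (lt_irrefl j),
      fun _ => hroom⟩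

lemma IsGoodPartition.exists_exchange_BFam_inter {r : ℕ} (hgood : IsGoodPartition M r E a)
    (hfin : M.E.Finite) (hrank : mrk M = r) (hjk : j < k) (hk : k ≤ t) {B₁ B₂ : Set α}
    (hB₁ : B₁ ∈ BFam M E a j ∩ BFam M E a k) (hB₂ : B₂ ∈ BFam M E a j ∩ BFam M E a k)
    {e : α} (he : e ∈ B₁ \ B₂) :
    ∃ f ∈ B₂ \ B₁, insert f (B₁ \ {e}) ∈ BFam M E a j ∩ BFam M E a k := by
  have hfull (B : Set α) (hB : M.IsBase B) : (B ∩ blockU E 0 t).ncard = blockSum a 0 t := by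
    rw [inter_eq_left.2 (hgood.ground_eq_blockU ▸ hB.subset_ground),
      hgood.ncard_isBase hfin hrank hB]
  have het : e ∈ blockU E 0 t := hgood.ground_eq_blockU ▸ hB₁.1.1.subset_ground he.1
  obtain ⟨l, hlt, hel, hB₁l, hB₂l, hlj, hlk⟩ := exists_window_start hjk hk hB₁ hB₂ het
  let IsRightEnd (h : ℕ) : Prop := l < h ∧ (h = t ∨
    (h < k ∧ e ∈ blockU E 0 h ∧ (B₁ ∩ blockU E 0 h).ncard = blockSum a 0 h))
  classical
  have hex : ∃ h, IsRightEnd h := ⟨t, hlt, .inl rfl⟩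
  obtain ⟨m, ⟨hlm, hm⟩, hmin⟩ : ∃ m, IsRightEnd m ∧ ∀ h < m, ¬ IsRightEnd h :=
    ⟨Nat.find hex, Nat.find_spec hex, fun _ => Nat.find_min hex⟩
  have hmt : m ≤ t := not_lt.1 fun h => hmin t h ⟨hlt, .inl rfl⟩
  have hm' : e ∈ blockU E 0 m ∧ (B₁ ∩ blockU E 0 m).ncard = blockSum a 0 m ∧
      blockSum a 0 m ≤ (B₂ ∩ blockU E 0 m).ncard := by
    rcases hm with rfl | ⟨hmk, hem, hB₁m⟩
    · exact ⟨het, hfull B₁ hB₁.1.1, (hfull B₂ hB₂.1.1).ge⟩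
    · exact ⟨hem, hB₁m, hB₂.2.2.1 m (by omega) (by omega)⟩
  refine hgood.exists_exchange_of_window hfin hrank hjk hB₁ hB₂ he hlm hmt ⟨hm'.1, hel⟩ hB₁l
    hm'.2.1 hB₂l hm'.2.2 (fun h hlh hhm hhk heh => ?_) (fun h hlh _ hh => ?_)
  · exact lt_of_le_of_ne (hB₁.2.2.1 h (by omega) (by omega))
      fun heq => hmin h hhm ⟨hlh, .inr ⟨hhk, heh, heq.symm⟩⟩
  · rcases hh with rfl | rfl
    exacts [.inl (hlj hlh), hlk hlh]

end BFam

theorem statement5_general {α : Type*} {t : ℕ} (M : Matroid α) (hfin : M.E.Finite)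
    (r : ℕ) (hrank : mrk M = r) (E : Fin t → Set α) (a : Fin t → ℕ)
    (hgood : IsGoodPartition M r E a)
    (j k : ℕ) (hjk : j < k) (hk : k ≤ t) :
    BFam M E a j ∩ BFam M E a k =
      {B | M.IsBase B ∧
        (∀ h : ℕ, 1 ≤ h → h ≤ k → h ≠ j → h ≠ k →
          blockSum a 0 h ≤ (B ∩ blockU E 0 h).ncard) ∧
        (B ∩ blockU E 0 j).ncard = blockSum a 0 j ∧
        (B ∩ blockU E 0 k).ncard ≤ blockSum a 0 k} ∧
    (∀ X ∈ BFam M E a j ∩ BFam M E a k, ∀ Y ∈ BFam M E a j ∩ BFam M E a k,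
      ∀ e ∈ X \ Y, ∃ f ∈ Y \ X, insert f (X \ {e}) ∈ BFam M E a j ∩ BFam M E a k) ∧
    ((BFam M E a j ∩ BFam M E a k).Nonempty →
      IsBaseCollection M.E (BFam M E a j ∩ BFam M E a k)) := by
  have hexch : ExchangeProperty (· ∈ BFam M E a j ∩ BFam M E a k) :=
    fun _ _ hX hY _ he => hgood.exists_exchange_BFam_inter hfin hrank hjk hk hX hY he
  refine ⟨BFam_inter_BFam_eq hjk, fun X hX Y hY => hexch X Y hX hY, fun hne => ?_⟩
  exact ⟨Matroid.ofIsBaseOfFinite hfin _ hne hexch fun B hB => hB.1.1.subset_ground, rfl,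
    fun _ => Iff.rfl⟩

/-- for a good `t`-partition of `M` and `1 ≤ j < k ≤ t`, the intersection
`ℬ(M_j) ∩ ℬ(M_k)` has the stated description, satisfies the basis exchange axiom, and is
the collection of bases of a matroid on `E` whenever it is nonempty. -/
theorem statement5 {α : Type*} {t : ℕ} (ht : 2 ≤ t) (M : Matroid α) (hfin : M.E.Finite)
    (r : ℕ) (hrank : mrk M = r) (E : Fin t → Set α) (a : Fin t → ℕ)
    (hgood : IsGoodPartition M r E a)
    (j k : ℕ) (hj : 1 ≤ j) (hjk : j < k) (hk : k ≤ t) :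
    BFam M E a j ∩ BFam M E a k =
      {B | M.IsBase B ∧
        (∀ h : ℕ, 1 ≤ h → h ≤ k → h ≠ j → h ≠ k →
          blockSum a 0 h ≤ (B ∩ blockU E 0 h).ncard) ∧
        (B ∩ blockU E 0 j).ncard = blockSum a 0 j ∧
        (B ∩ blockU E 0 k).ncard ≤ blockSum a 0 k} ∧
    (∀ X ∈ BFam M E a j ∩ BFam M E a k, ∀ Y ∈ BFam M E a j ∩ BFam M E a k,
      ∀ e ∈ X \ Y, ∃ f ∈ Y \ X, insert f (X \ {e}) ∈ BFam M E a j ∩ BFam M E a k) ∧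
    ((BFam M E a j ∩ BFam M E a k).Nonempty →
      IsBaseCollection M.E (BFam M E a j ∩ BFam M E a k)) :=
  statement5_general M hfin r hrank E a hgood j k hjk hk
end
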